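/- arXiv:2209.03012 — 8 statements merged into one kernel-verified Lean document; each statement's English description precedes it below -/
import Mathlib

section
/- Let 1 < p < ∞. For all real numbers a, b > 0 and c, d ≥ 0, one has |a-b|^{p-2}(a-b) · (c^p/a^{p-1} - d^p/b^{p-1}) ≤ |c-d|^p. -/
/-!
For `b < a` the factor `J_p(a - b)` is `(a - b)^(p-1)` (the case `a < b` follows by swapping
`(a, c)` with `(b, d)`). If `c ≤ d` the left side is nonpositive. If `d ≤ c`, Radon's inequality
`(x + y)^p / (α + β)^(p-1) ≤ x^p / α^(p-1) + y^p / β^(p-1)`, a rescaled form of the convexity of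
`t ↦ t^p`, applied to `x = d`, `y = c - d`, `α = b`, `β = a - b` gives
`c^p / a^(p-1) ≤ d^p / b^(p-1) + (c - d)^p / (a - b)^(p-1)`, which is the claim.
-/

open Real

/-- **Radon's inequality** for two terms. -/
theorem add_rpow_div_rpow_sub_one_le {p x y α β : ℝ} (hp : 1 ≤ p) (hx : 0 ≤ x) (hy : 0 ≤ y)
    (hα : 0 < α) (hβ : 0 < β) :
    (x + y) ^ p / (α + β) ^ (p - 1) ≤ x ^ p / α ^ (p - 1) + y ^ p / β ^ (p - 1) := by
  have hαβ : 0 < α + β := by positivity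
  have hconv : (α / (α + β) * (x / α) + β / (α + β) * (y / β)) ^ p ≤
      α / (α + β) * (x / α) ^ p + β / (α + β) * (y / β) ^ p :=
    (convexOn_rpow hp).2 (Set.mem_Ici.2 (div_nonneg hx hα.le))
      (Set.mem_Ici.2 (div_nonneg hy hβ.le)) (div_nonneg hα.le hαβ.le) (div_nonneg hβ.le hαβ.le)
      (by field_simp)
  have hmean : α / (α + β) * (x / α) + β / (α + β) * (y / β) = (x + y) / (α + β) := by
    field_simp
  rw [hmean, div_rpow (by positivity) hαβ.le, div_rpow hx hα.le, div_rpow hy hβ.le] at hconv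
  rw [rpow_sub_one hαβ.ne', rpow_sub_one hα.ne', rpow_sub_one hβ.ne']
  calc (x + y) ^ p / ((α + β) ^ p / (α + β)) = (α + β) * ((x + y) ^ p / (α + β) ^ p) := by
        field_simp
    _ ≤ (α + β) * (α / (α + β) * (x ^ p / α ^ p) + β / (α + β) * (y ^ p / β ^ p)) := by gcongr
    _ = x ^ p / (α ^ p / α) + y ^ p / (β ^ p / β) := by field_simp

theorem picone_of_lt {p a b c d : ℝ} (hp : 1 ≤ p) (hb : 0 < b) (hc : 0 ≤ c) (hd : 0 ≤ d)
    (hba : b < a) :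
    (a - b) ^ (p - 1) * (c ^ p / a ^ (p - 1) - d ^ p / b ^ (p - 1)) ≤ |c - d| ^ p := by
  have hab : 0 < a - b := sub_pos.2 hba
  have hp1 : 0 ≤ p - 1 := sub_nonneg.2 hp
  rcases le_total c d with hcd | hdc
  · have hle : c ^ p / a ^ (p - 1) ≤ d ^ p / b ^ (p - 1) := by gcongr
    calc (a - b) ^ (p - 1) * (c ^ p / a ^ (p - 1) - d ^ p / b ^ (p - 1)) ≤ 0 :=
          mul_nonpos_of_nonneg_of_nonpos (by positivity) (sub_nonpos.2 hle)
      _ ≤ |c - d| ^ p := by positivity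
  · have hradon := add_rpow_div_rpow_sub_one_le hp hd (sub_nonneg.2 hdc) hb hab
    rw [add_sub_cancel, add_sub_cancel] at hradon
    have hpos : 0 < (a - b) ^ (p - 1) := by positivity
    rw [abs_of_nonneg (sub_nonneg.2 hdc)]
    calc (a - b) ^ (p - 1) * (c ^ p / a ^ (p - 1) - d ^ p / b ^ (p - 1))
        ≤ (a - b) ^ (p - 1) * ((c - d) ^ p / (a - b) ^ (p - 1)) := by gcongr; linarith
      _ = (c - d) ^ p := by field_simp

theorem abs_rpow_sub_two_mul_self_of_pos {t : ℝ} (p : ℝ) (ht : 0 < t) :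
    |t| ^ (p - 2) * t = t ^ (p - 1) := by
  rw [abs_of_pos ht, ← rpow_add_one ht.ne']
  ring_nf

theorem stmt_0 (p : ℝ) (hp : 1 < p) (a b c d : ℝ) (ha : 0 < a) (hb : 0 < b)
    (hc : 0 ≤ c) (hd : 0 ≤ d) :
    |a - b| ^ (p - 2) * (a - b) * (c ^ p / a ^ (p - 1) - d ^ p / b ^ (p - 1)) ≤ |c - d| ^ p := by
  rcases lt_trichotomy a b with hab | rfl | hba
  · have hJ : |a - b| ^ (p - 2) * (a - b) = -(b - a) ^ (p - 1) := by
      rw [abs_sub_comm, ← abs_rpow_sub_two_mul_self_of_pos p (sub_pos.2 hab)]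
      ring
    calc |a - b| ^ (p - 2) * (a - b) * (c ^ p / a ^ (p - 1) - d ^ p / b ^ (p - 1))
        = (b - a) ^ (p - 1) * (d ^ p / b ^ (p - 1) - c ^ p / a ^ (p - 1)) := by rw [hJ]; ring
      _ ≤ |d - c| ^ p := picone_of_lt hp.le ha hd hc hab
      _ = |c - d| ^ p := by rw [abs_sub_comm]
  · simp only [sub_self, mul_zero, zero_mul]
    positivity
  · rw [abs_rpow_sub_two_mul_self_of_pos p (sub_pos.2 hba)]
    exact picone_of_lt hp.le hb hc hd hba
end

section
/- Let 1 < p < ∞, a, b > 0, c, d ≥ 0, and suppose equality holds in the discrete Picone inequality, i.e. |a-b|^{p-2}(a-b) · (c^p/a^{p-1} - d^p/b^{p-1}) = |c-d|^p. If c > 0 and d > 0, then c/a = d/b. -/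
/-!
For `b < a` put `w = (a - b) / a`, so that `1 - w = b / a`, and `u = |c - d| / (a - b)`, `v = d / b`.
Then `c / a ≤ w u + (1 - w) v`, while equality in Picone's inequality says exactly that
`(c / a) ^ p = w u ^ p + (1 - w) v ^ p`. Strict convexity of `x ↦ x ^ p` therefore forces `u = v`,
and then `(c / a) ^ p = v ^ p`. The case `a < b` follows by symmetry, and for `a = b` the
equality reads `|c - d| ^ p = 0`.
-/

open Real

lemma picone_lhs_comm (p a b c d : ℝ) :
    |b - a| ^ (p - 2) * (b - a) * (d ^ p / b ^ (p - 1) - c ^ p / a ^ (p - 1))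
      = |a - b| ^ (p - 2) * (a - b) * (c ^ p / a ^ (p - 1) - d ^ p / b ^ (p - 1)) := by
  rw [abs_sub_comm]
  ring

lemma eq_of_weighted_rpow_le_rpow_weighted {p w x y : ℝ} (hp : 1 < p) (hw₀ : 0 < w) (hw₁ : w < 1)
    (hx : 0 ≤ x) (hy : 0 ≤ y) (h : w * x ^ p + (1 - w) * y ^ p ≤ (w * x + (1 - w) * y) ^ p) :
    x = y := by
  by_contra hxy
  have := (strictConvexOn_rpow hp).2 (Set.mem_Ici.2 hx) (Set.mem_Ici.2 hy) hxy hw₀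
    (sub_pos.2 hw₁) (add_sub_cancel w 1)
  simp only [smul_eq_mul] at this
  linarith

lemma rpow_div_eq_weighted_of_picone_eq {p a b c d : ℝ} (ha : 0 < a) (hb : 0 < b) (hba : b < a)
    (hc : 0 ≤ c) (hd : 0 ≤ d)
    (heq : |a - b| ^ (p - 2) * (a - b) * (c ^ p / a ^ (p - 1) - d ^ p / b ^ (p - 1))
      = |c - d| ^ p) :
    (c / a) ^ p = (a - b) / a * (|c - d| / (a - b)) ^ p + b / a * (d / b) ^ p := by
  have hab : 0 < a - b := sub_pos.2 hba
  have hJ : |a - b| ^ (p - 2) * (a - b) = (a - b) ^ p / (a - b) := by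
    rw [abs_of_pos hab, ← rpow_sub_one hab.ne', ← rpow_add_one hab.ne']
    ring_nf
  rw [hJ, rpow_sub_one ha.ne', rpow_sub_one hb.ne'] at heq
  rw [div_rpow hc ha.le, div_rpow (abs_nonneg _) hab.le, div_rpow hd hb.le, ← heq]
  have : 0 < (a - b) ^ p := by positivity
  have : 0 < a ^ p := by positivity
  have : 0 < b ^ p := by positivity
  field_simp
  ring

lemma div_eq_div_of_picone_eq_of_lt {p a b c d : ℝ} (hp : 1 < p) (ha : 0 < a) (hb : 0 < b)
    (hba : b < a) (hc : 0 ≤ c) (hd : 0 ≤ d)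
    (heq : |a - b| ^ (p - 2) * (a - b) * (c ^ p / a ^ (p - 1) - d ^ p / b ^ (p - 1))
      = |c - d| ^ p) :
    c / a = d / b := by
  have hab : 0 < a - b := sub_pos.2 hba
  have hw : (1 : ℝ) - (a - b) / a = b / a := by field_simp; ring
  have hweighted := rpow_div_eq_weighted_of_picone_eq ha hb hba hc hd heq
  rw [← hw] at hweighted
  have hmean : c / a ≤ (a - b) / a * (|c - d| / (a - b)) + (1 - (a - b) / a) * (d / b) := by
    rw [hw]
    field_simp
    linarith [le_abs_self (c - d)]
  have huv : |c - d| / (a - b) = d / b := by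
    refine eq_of_weighted_rpow_le_rpow_weighted (w := (a - b) / a) hp (by positivity)
      (by rw [div_lt_one ha]; linarith) (by positivity) (by positivity) ?_
    rw [← hweighted]
    exact rpow_le_rpow (by positivity) hmean (by linarith)
  rw [huv, ← add_mul, add_sub_cancel, one_mul] at hweighted
  exact (rpow_left_inj (by positivity) (by positivity) (by linarith)).1 hweighted

theorem stmt_1 (p : ℝ) (hp : 1 < p) (a b c d : ℝ) (ha : 0 < a) (hb : 0 < b)
    (hc : 0 < c) (hd : 0 < d)
    (heq : |a - b| ^ (p - 2) * (a - b) * (c ^ p / a ^ (p - 1) - d ^ p / b ^ (p - 1))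
      = |c - d| ^ p) :
    c / a = d / b := by
  rcases lt_trichotomy b a with hba | rfl | hab
  · exact div_eq_div_of_picone_eq_of_lt hp ha hb hba hc.le hd.le heq
  · rw [sub_self, mul_zero, zero_mul, eq_comm, rpow_eq_zero (abs_nonneg _) (by linarith),
      abs_eq_zero, sub_eq_zero] at heq
    rw [heq]
  · rw [← picone_lhs_comm, abs_sub_comm c d] at heq
    exact (div_eq_div_of_picone_eq_of_lt hp hb ha hab hd.le hc.le heq).symm
end

section
/- Let 1 < p < ∞, 0 < s < 1 and M > 0. Let β ∈ ℝ with (sp-1)/p < β < s, and let U_β(t) = t^β for t > 0 extended by 0 for t ≤ 0. Then the Gagliardo seminorm of U_β on (0,M) satisfies [U_β]^p_{W^{s,p}((0,M))} ≤ ( ∫_0^1 |1-τ^β|^p (1+τ^{sp-βp-1}) / (1-τ)^{1+sp} dτ ) · M^{βp-sp+1}/(βp-sp+1); in particular it is finite. -/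
/-!
For `x, y > 0` the kernel `|x^β - y^β|^p / |x - y|^(1+sp)` is homogeneous of degree
`βp - 1 - sp`. Substituting `y = xτ` on `(0, x)` and `y = x/τ` on `(x, M)`, and then enlarging
`(x/M, 1)` to `(0, 1)`, bounds the inner integral by `x^(βp-sp)` times the integral over `(0, 1)`
of the profile `|1 - τ^β|^p (1 + τ^(sp-βp-1)) / (1 - τ)^(1+sp)`; the factor `τ^(sp-βp-1)` is the
Jacobian `x/τ²` of the second substitution combined with the homogeneity. Integrating
`x^(βp-sp)` over `(0, M)` gives the constant. The profile is integrable: near `0` it is dominated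
by powers `τ^e` with `e > -1`, and near `1` the mean value theorem gives `|1 - τ^β| ≲ 1 - τ`, so
it is `O((1 - τ)^(p-1-sp))` with `p - 1 - sp > -1`.
-/

open MeasureTheory Set Real intervalIntegral

noncomputable def rpowKernel (β p q u v : ℝ) : ℝ := |u ^ β - v ^ β| ^ p / |u - v| ^ q

noncomputable def rpowProfile (β p s τ : ℝ) : ℝ :=
  |1 - τ ^ β| ^ p * (1 + τ ^ (s * p - β * p - 1)) / (1 - τ) ^ (1 + s * p)

section Kernel

variable {β p q : ℝ}

lemma rpowKernel_comm (u v : ℝ) : rpowKernel β p q u v = rpowKernel β p q v u := by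
  rw [rpowKernel, rpowKernel, abs_sub_comm, abs_sub_comm u]

lemma rpowKernel_mul_mul {x u v : ℝ} (hx : 0 < x) (hu : 0 ≤ u) (hv : 0 ≤ v) :
    rpowKernel β p q (x * u) (x * v) = x ^ (β * p - q) * rpowKernel β p q u v := by
  have hxβ : 0 < x ^ β := rpow_pos_of_pos hx β
  rw [rpowKernel, rpowKernel, mul_rpow hx.le hu, mul_rpow hx.le hv, ← mul_sub, ← mul_sub,
    abs_mul, abs_mul, abs_of_pos hxβ, abs_of_pos hx, mul_rpow hxβ.le (abs_nonneg _),
    mul_rpow hx.le (abs_nonneg _), ← rpow_mul hx.le, rpow_sub hx]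
  field_simp

lemma rpowKernel_one_left {τ : ℝ} (hτ : τ ≤ 1) :
    rpowKernel β p q 1 τ = |1 - τ ^ β| ^ p / (1 - τ) ^ q := by
  rw [rpowKernel, one_rpow, abs_of_nonneg (sub_nonneg.2 hτ)]

end Kernel

lemma setLIntegral_Ioo_zero_eq_mul {x : ℝ} (hx : 0 < x) (g : ℝ → ENNReal) :
    ∫⁻ y in Ioo 0 x, g y = ENNReal.ofReal x * ∫⁻ τ in Ioo 0 1, g (x * τ) := by
  have himage : (x * ·) '' Ioo 0 1 = Ioo 0 x := by
    rw [image_mul_left_Ioo hx, mul_zero, mul_one]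
  rw [← himage, lintegral_image_eq_lintegral_abs_deriv_mul measurableSet_Ioo
    (fun τ _ => (hasDerivAt_const_mul x).hasDerivWithinAt) (mul_right_injective₀ hx.ne').injOn,
    abs_of_pos hx, lintegral_const_mul' _ _ ENNReal.ofReal_ne_top]

lemma setLIntegral_Ioo_eq_div {x M : ℝ} (hx : 0 < x) (hxM : x ≤ M) (g : ℝ → ENNReal) :
    ∫⁻ y in Ioo x M, g y = ∫⁻ τ in Ioo (x / M) 1, ENNReal.ofReal (x / τ ^ 2) * g (x / τ) := by
  have hM : 0 < M := hx.trans_le hxM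
  have hpos : ∀ τ ∈ Ioo (x / M) 1, 0 < τ := fun τ hτ => (div_pos hx hM).trans hτ.1
  have himage : (x / ·) '' Ioo (x / M) 1 = Ioo x M := by
    ext y
    simp only [mem_image, mem_Ioo]
    constructor
    · rintro ⟨τ, hτ, rfl⟩
      have hτ0 := hpos τ hτ
      have hxτM : x < τ * M := (div_lt_iff₀ hM).1 hτ.1
      exact ⟨(lt_div_iff₀ hτ0).2 (by nlinarith [hτ.2]), (div_lt_iff₀ hτ0).2 (by linarith)⟩
    · rintro ⟨hy, hyM⟩
      have hy0 : 0 < y := hx.trans hy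
      exact ⟨x / y, ⟨div_lt_div_of_pos_left hx hy0 hyM, (div_lt_one hy0).2 hy⟩, by field_simp⟩
  have hderiv : ∀ τ ∈ Ioo (x / M) 1, HasDerivWithinAt (x / ·) (-x / τ ^ 2) (Ioo (x / M) 1) τ :=
    fun τ hτ => by
      simpa [div_eq_mul_inv] using
        ((hasDerivAt_inv (hpos τ hτ).ne').const_mul x).hasDerivWithinAt
  have hinj : InjOn (x / ·) (Ioo (x / M) 1) := fun a _ b _ h =>
    inv_injective (mul_left_cancel₀ hx.ne' (by simpa [div_eq_mul_inv] using h))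
  rw [← himage, lintegral_image_eq_lintegral_abs_deriv_mul measurableSet_Ioo hderiv hinj]
  refine setLIntegral_congr_fun measurableSet_Ioo fun τ hτ => ?_
  have := hpos τ hτ
  rw [neg_div, abs_neg, abs_of_pos (by positivity)]

section Split

variable {β p q x : ℝ}

lemma setLIntegral_rpowKernel_Ioo_zero (hx : 0 < x) :
    ∫⁻ y in Ioo 0 x, ENNReal.ofReal (rpowKernel β p q x y) =
      ENNReal.ofReal (x ^ (β * p - q + 1)) *
        ∫⁻ τ in Ioo 0 1, ENNReal.ofReal (|1 - τ ^ β| ^ p / (1 - τ) ^ q) := by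
  rw [setLIntegral_Ioo_zero_eq_mul hx, ← lintegral_const_mul' _ _ ENNReal.ofReal_ne_top,
    ← lintegral_const_mul' _ _ ENNReal.ofReal_ne_top]
  refine setLIntegral_congr_fun measurableSet_Ioo fun τ ⟨hτ0, hτ1⟩ => ?_
  have hscale : rpowKernel β p q x (x * τ) = x ^ (β * p - q) * rpowKernel β p q 1 τ := by
    simpa using rpowKernel_mul_mul (β := β) (p := p) (q := q) hx zero_le_one hτ0.le
  rw [← ENNReal.ofReal_mul hx.le, ← ENNReal.ofReal_mul (by positivity), hscale,
    rpowKernel_one_left hτ1.le, rpow_add_one hx.ne']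
  ring_nf

lemma setLIntegral_rpowKernel_Ioo_le {M : ℝ} (hx : 0 < x) (hxM : x ≤ M) :
    ∫⁻ y in Ioo x M, ENNReal.ofReal (rpowKernel β p q x y) ≤
      ENNReal.ofReal (x ^ (β * p - q + 1)) *
        ∫⁻ τ in Ioo 0 1, ENNReal.ofReal (|1 - τ ^ β| ^ p * τ ^ (q - β * p - 2) / (1 - τ) ^ q) := by
  have hsub : Ioo (x / M) 1 ⊆ Ioo 0 1 := Ioo_subset_Ioo_left (div_pos hx (hx.trans_le hxM)).le
  rw [setLIntegral_Ioo_eq_div hx hxM, ← lintegral_const_mul' _ _ ENNReal.ofReal_ne_top]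
  refine (lintegral_mono_set hsub).trans_eq' (setLIntegral_congr_fun measurableSet_Ioo
    fun τ hτ => ?_)
  obtain ⟨hτ0, hτ1⟩ := hsub hτ
  have hscale : rpowKernel β p q x (x / τ) = (x / τ) ^ (β * p - q) * rpowKernel β p q 1 τ := by
    rw [rpowKernel_comm 1, ← rpowKernel_mul_mul (div_pos hx hτ0) hτ0.le zero_le_one,
      div_mul_cancel₀ x hτ0.ne', mul_one]
  have hτpow : τ ^ (q - β * p - 2) = (τ ^ (β * p - q))⁻¹ / τ ^ 2 := by
    rw [show q - β * p - 2 = -(β * p - q) - 2 by ring, rpow_sub hτ0, rpow_neg hτ0.le,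
      rpow_two]
  rw [← ENNReal.ofReal_mul (by positivity), ← ENNReal.ofReal_mul (by positivity), hscale,
    rpowKernel_one_left hτ1.le, rpow_add_one hx.ne', div_rpow hx.le hτ0.le, hτpow]
  have : τ ^ (β * p - q) ≠ 0 := (rpow_pos_of_pos hτ0 _).ne'
  field_simp

end Split

lemma abs_one_sub_rpow_rpow_le {β p τ : ℝ} (hτ : 0 < τ) (hp : 0 ≤ p) :
    |1 - τ ^ β| ^ p ≤ 1 + τ ^ (β * p) := by
  have hτβ : 0 < τ ^ β := rpow_pos_of_pos hτ β
  have habs : |1 - τ ^ β| ≤ max 1 (τ ^ β) :=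
    abs_sub_le_iff.2 ⟨by linarith [le_max_left 1 (τ ^ β)], by linarith [le_max_right 1 (τ ^ β)]⟩
  refine (rpow_le_rpow (abs_nonneg _) habs hp).trans ?_
  rcases max_choice 1 (τ ^ β) with h | h <;> rw [h]
  · rw [one_rpow]; linarith [rpow_pos_of_pos hτ (β * p)]
  · rw [← rpow_mul hτ.le]; linarith

lemma abs_one_sub_rpow_le {β a τ : ℝ} (hβ : β ≤ 1) (ha : 0 < a) (hτ : τ ∈ Icc a 1) :
    |1 - τ ^ β| ≤ |β| * a ^ (β - 1) * (1 - τ) := by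
  have hderiv : ∀ t ∈ Icc a 1, HasDerivWithinAt (· ^ β) (β * t ^ (β - 1)) (Icc a 1) t :=
    fun t ht => (hasDerivAt_rpow_const (Or.inl (ha.trans_le ht.1).ne')).hasDerivWithinAt
  have hbound : ∀ t ∈ Icc a 1, ‖β * t ^ (β - 1)‖ ≤ |β| * a ^ (β - 1) := fun t ht => by
    rw [norm_mul, norm_eq_abs, norm_of_nonneg (rpow_nonneg (ha.le.trans ht.1) _)]
    exact mul_le_mul_of_nonneg_left (rpow_le_rpow_of_nonpos ha ht.1 (by linarith))
      (abs_nonneg β)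
  have := (convex_Icc a 1).norm_image_sub_le_of_norm_hasDerivWithin_le hderiv hbound hτ
    (right_mem_Icc.2 (hτ.1.trans hτ.2))
  rwa [one_rpow, norm_eq_abs, norm_eq_abs, abs_of_nonneg (sub_nonneg.2 hτ.2)] at this

section Profile

variable {β p s : ℝ}

lemma rpowProfile_nonneg {τ : ℝ} (hτ₀ : 0 ≤ τ) (hτ₁ : τ ≤ 1) : 0 ≤ rpowProfile β p s τ := by
  have : 0 ≤ 1 - τ := by linarith
  unfold rpowProfile; positivity

lemma measurable_rpowProfile : Measurable (rpowProfile β p s) := by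
  unfold rpowProfile; fun_prop

lemma intervalIntegrable_rpowProfile_zero_half (hp : 0 < p) (hs : 0 < s)
    (hβ₁ : s * p - 1 < β * p) (hβ₂ : β * p < s * p) :
    IntervalIntegrable (rpowProfile β p s) volume 0 2⁻¹ := by
  have hmajorant : IntervalIntegrable (fun τ => 2 ^ (1 + s * p) *
      (1 + τ ^ (β * p) + τ ^ (s * p - β * p - 1) + τ ^ (s * p - 1))) volume 0 2⁻¹ := by
    refine (((intervalIntegrable_const.add (intervalIntegrable_rpow' ?_)).add
      (intervalIntegrable_rpow' ?_)).add (intervalIntegrable_rpow' ?_)).const_mul _ <;>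
    nlinarith
  refine hmajorant.mono_fun' measurable_rpowProfile.aestronglyMeasurable ?_
  rw [uIoc_of_le (by norm_num)]
  filter_upwards [ae_restrict_mem measurableSet_Ioc] with τ ⟨hτ0, hτ⟩
  have h1τ : 0 < 1 - τ := by linarith
  have hq : 1 ≤ (2 * (1 - τ)) ^ (1 + s * p) := one_le_rpow (by linarith) (by positivity)
  have hexp : τ ^ (β * p) * τ ^ (s * p - β * p - 1) = τ ^ (s * p - 1) := by
    rw [← rpow_add hτ0]; ring_nf
  rw [norm_of_nonneg (rpowProfile_nonneg hτ0.le (by linarith)), rpowProfile,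
    div_le_iff₀ (by positivity)]
  calc |1 - τ ^ β| ^ p * (1 + τ ^ (s * p - β * p - 1))
      ≤ (1 + τ ^ (β * p)) * (1 + τ ^ (s * p - β * p - 1)) :=
        mul_le_mul_of_nonneg_right (abs_one_sub_rpow_rpow_le hτ0 hp.le) (by positivity)
    _ ≤ (1 + τ ^ (β * p)) * (1 + τ ^ (s * p - β * p - 1)) * (2 * (1 - τ)) ^ (1 + s * p) :=
        le_mul_of_one_le_right (by positivity) hq
    _ = _ := by
        rw [mul_rpow zero_le_two h1τ.le, ← hexp]; ring

lemma intervalIntegrable_rpowProfile_half_one (hp : 0 < p) (hs : s < 1) (hβ : β ≤ 1) :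
    IntervalIntegrable (rpowProfile β p s) volume 2⁻¹ 1 := by
  set C := |β| * (2⁻¹ : ℝ) ^ (β - 1)
  obtain ⟨E, hE⟩ := (isCompact_Icc (a := (2⁻¹ : ℝ)) (b := 1)).exists_bound_of_continuousOn
    (f := fun τ => 1 + τ ^ (s * p - β * p - 1)) <| continuousOn_const.add <|
      continuousOn_id.rpow_const fun τ hτ => Or.inl (by linarith [hτ.1] : τ ≠ 0)
  have hmajorant : IntervalIntegrable (fun τ => C ^ p * E * (1 - τ) ^ (p - (1 + s * p)))
      volume 2⁻¹ 1 := by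
    have h := (intervalIntegrable_rpow' (a := 0) (b := 2⁻¹)
      (by nlinarith : -1 < p - (1 + s * p))).comp_sub_left 1
    rw [sub_zero, show (1 : ℝ) - 2⁻¹ = 2⁻¹ by norm_num] at h
    exact h.symm.const_mul _
  refine hmajorant.mono_fun' measurable_rpowProfile.aestronglyMeasurable ?_
  rw [uIoc_of_le (by norm_num), ← Measure.restrict_congr_set Ioo_ae_eq_Ioc]
  filter_upwards [ae_restrict_mem measurableSet_Ioo] with τ ⟨hτ, hτ1⟩
  have h1τ : 0 < 1 - τ := by linarith
  have hτ0 : 0 < τ := by linarith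
  have hnum : |1 - τ ^ β| ^ p ≤ C ^ p * (1 - τ) ^ p := by
    rw [← mul_rpow (by positivity) h1τ.le]
    exact rpow_le_rpow (abs_nonneg _) (abs_one_sub_rpow_le hβ (by norm_num) ⟨hτ.le, hτ1.le⟩)
      hp.le
  have hfactor : 1 + τ ^ (s * p - β * p - 1) ≤ E := by
    simpa [abs_of_pos (by positivity : 0 < 1 + τ ^ (s * p - β * p - 1))] using
      hE τ ⟨hτ.le, hτ1.le⟩
  rw [norm_of_nonneg (rpowProfile_nonneg hτ0.le hτ1.le), rpowProfile, rpow_sub h1τ,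
    div_le_iff₀ (by positivity)]
  calc |1 - τ ^ β| ^ p * (1 + τ ^ (s * p - β * p - 1)) ≤ C ^ p * (1 - τ) ^ p * E :=
        mul_le_mul hnum hfactor (by positivity) (by positivity)
    _ = _ := by field_simp

lemma integrableOn_rpowProfile (hp : 0 < p) (hs : s ∈ Ioo 0 1) (hβ₁ : s * p - 1 < β * p)
    (hβ₂ : β < s) : IntegrableOn (rpowProfile β p s) (Ioo 0 1) :=
  (intervalIntegrable_iff_integrableOn_Ioo_of_le zero_le_one).1 <|
    (intervalIntegrable_rpowProfile_zero_half hp hs.1 hβ₁ (by nlinarith)).trans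
      (intervalIntegrable_rpowProfile_half_one hp hs.2 (hβ₂.trans hs.2).le)

end Profile

lemma setLIntegral_rpow_Ioo_zero {e M : ℝ} (he : -1 < e) (hM : 0 ≤ M) :
    ∫⁻ x in Ioo 0 M, ENNReal.ofReal (x ^ e) = ENNReal.ofReal (M ^ (e + 1) / (e + 1)) := by
  have hint : IntegrableOn (· ^ e) (Ioo 0 M) :=
    (intervalIntegrable_iff_integrableOn_Ioo_of_le hM).1 (intervalIntegrable_rpow' he)
  have hnonneg : 0 ≤ᵐ[volume.restrict (Ioo 0 M)] (· ^ e) := by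
    filter_upwards [ae_restrict_mem measurableSet_Ioo] with x hx using rpow_nonneg hx.1.le e
  rw [← ofReal_integral_eq_lintegral_ofReal hint hnonneg, ← integral_Ioc_eq_integral_Ioo,
    ← integral_of_le hM, integral_rpow (Or.inl he), zero_rpow (by linarith), sub_zero]

lemma setLIntegral_rpowKernel_le {β p s x M : ℝ} (hx : 0 < x) (hxM : x < M) :
    ∫⁻ y in Ioo 0 M, ENNReal.ofReal (rpowKernel β p (1 + s * p) x y) ≤
      ENNReal.ofReal (x ^ (β * p - s * p)) *
        ∫⁻ τ in Ioo 0 1, ENNReal.ofReal (rpowProfile β p s τ) := by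
  have hprofile : ∫⁻ τ in Ioo 0 1, ENNReal.ofReal (rpowProfile β p s τ) =
      (∫⁻ τ in Ioo 0 1, ENNReal.ofReal (|1 - τ ^ β| ^ p / (1 - τ) ^ (1 + s * p))) +
        ∫⁻ τ in Ioo 0 1, ENNReal.ofReal
          (|1 - τ ^ β| ^ p * τ ^ (1 + s * p - β * p - 2) / (1 - τ) ^ (1 + s * p)) := by
    rw [← lintegral_add_left (by fun_prop)]
    refine setLIntegral_congr_fun measurableSet_Ioo fun τ ⟨hτ0, hτ1⟩ => ?_
    have h1τ : 0 < 1 - τ := by linarith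
    rw [← ENNReal.ofReal_add (by positivity) (by positivity), rpowProfile,
      show 1 + s * p - β * p - 2 = s * p - β * p - 1 by ring]
    ring_nf
  have hexp : β * p - (1 + s * p) + 1 = β * p - s * p := by ring
  rw [← Ioo_union_Ico_eq_Ioo hx hxM.le,
    lintegral_union measurableSet_Ico (disjoint_left.2 fun y h₁ h₂ => h₂.1.not_gt h₁.2),
    setLIntegral_congr Ioo_ae_eq_Ico.symm, hprofile, mul_add, ← hexp]
  exact add_le_add (setLIntegral_rpowKernel_Ioo_zero hx).le (setLIntegral_rpowKernel_Ioo_le hx hxM.le)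

theorem stmt_5 (p s M β : ℝ) (hp : 1 < p) (hs : s ∈ Set.Ioo (0:ℝ) 1) (hM : 0 < M)
    (hβ1 : (s * p - 1) / p < β) (hβ2 : β < s) :
    (∫⁻ x in Set.Ioo (0:ℝ) M, ∫⁻ y in Set.Ioo (0:ℝ) M,
        ENNReal.ofReal
          (|(if 0 < x then x ^ β else 0) - (if 0 < y then y ^ β else 0)| ^ p
            / |x - y| ^ (1 + s * p))) ≤
      ENNReal.ofReal
        ((∫ τ in Set.Ioo (0:ℝ) 1,
            |1 - τ ^ β| ^ p * (1 + τ ^ (s * p - β * p - 1)) / (1 - τ) ^ (1 + s * p)) *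
          M ^ (β * p - s * p + 1) / (β * p - s * p + 1)) := by
  have hp0 : 0 < p := by linarith
  have hβp : s * p - 1 < β * p := by rwa [div_lt_iff₀ hp0] at hβ1
  have hprofile : ∫⁻ τ in Ioo 0 1, ENNReal.ofReal (rpowProfile β p s τ) =
      ENNReal.ofReal (∫ τ in Ioo 0 1, rpowProfile β p s τ) := by
    refine (ofReal_integral_eq_lintegral_ofReal (integrableOn_rpowProfile hp0 hs hβp hβ2) ?_).symm
    filter_upwards [ae_restrict_mem measurableSet_Ioo] with τ hτ
    exact rpowProfile_nonneg hτ.1.le hτ.2.le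
  calc _ = ∫⁻ x in Ioo 0 M, ∫⁻ y in Ioo 0 M, ENNReal.ofReal (rpowKernel β p (1 + s * p) x y) :=
        setLIntegral_congr_fun measurableSet_Ioo fun x hx =>
          setLIntegral_congr_fun measurableSet_Ioo fun y hy => by
            rw [if_pos hx.1, if_pos hy.1, rpowKernel]
    _ ≤ ∫⁻ x in Ioo 0 M, ENNReal.ofReal (x ^ (β * p - s * p)) *
          ∫⁻ τ in Ioo 0 1, ENNReal.ofReal (rpowProfile β p s τ) :=
        setLIntegral_mono' measurableSet_Ioo fun x hx => setLIntegral_rpowKernel_le hx.1 hx.2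
    _ = _ := by
        rw [lintegral_mul_const' _ _ (hprofile ▸ ENNReal.ofReal_ne_top),
          setLIntegral_rpow_Ioo_zero (by linarith) hM.le, hprofile, mul_comm,
          ← ENNReal.ofReal_mul (setIntegral_nonneg measurableSet_Ioo fun τ hτ =>
            rpowProfile_nonneg hτ.1.le hτ.2.le), mul_div_assoc]
        rfl
end

section
/- Let 1 < p < ∞, 0 < s < 1, and for 0 < t < 1 define g(β) = J_p(1 - t^β)(1 - t^{sp-1-β(p-1)}) for β ∈ (-1/(p-1), sp/(p-1)), where J_p(τ) = |τ|^{p-2}τ. Then g is differentiable on (-1/(p-1),0) ∪ (0, sp/(p-1)) and g'(β) ≥ 0 if and only if β ≤ (sp-1)/p. -/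
/-!
Write `J(τ) = |τ|^(p-2) τ`, so `J' = (p-1) |τ|^(p-2)`, and `e(β) = sp - 1 - β(p-1)`. Away from
`β = 0` (where `1 - t^β` vanishes) the product rule collapses the derivative of
`g(β) = J(1 - t^β) (1 - t^e(β))` to `(p-1) log t |1 - t^β|^(p-2) (t^e(β) - t^β)`. The prefactor
is negative, so `g'(β) ≥ 0` iff `t^e(β) ≤ t^β`, i.e. (as `t < 1`) iff `β ≤ e(β)`, i.e. `β ≤ (sp-1)/p`.
-/

open Real

lemma hasDerivAt_abs_rpow_mul_self {q x : ℝ} (hx : x ≠ 0) :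
    HasDerivAt (fun y : ℝ => |y| ^ q * y) ((q + 1) * |x| ^ q) x := by
  have hx' : |x| ≠ 0 := abs_ne_zero.2 hx
  have habs : HasDerivAt (fun y : ℝ => |y| ^ q) (SignType.sign x * q * |x| ^ (q - 1)) x :=
    (hasDerivAt_abs hx).rpow_const (Or.inl hx')
  refine (habs.mul (hasDerivAt_id x)).congr_deriv ?_
  calc SignType.sign x * q * |x| ^ (q - 1) * x + |x| ^ q * 1
      = q * |x| ^ q * (SignType.sign x * x / |x|) + |x| ^ q := by rw [rpow_sub_one hx']; ring
    _ = (q + 1) * |x| ^ q := by rw [sign_mul_self, div_self hx']; ring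

lemma rpow_ne_one_of_ne_zero {t β : ℝ} (ht0 : 0 < t) (ht1 : t ≠ 1) (hβ : β ≠ 0) : t ^ β ≠ 1 :=
  fun h => hβ ((rpow_right_inj ht0 ht1).1 (h.trans (rpow_zero t).symm))

lemma hasDerivAt_hardyIntegrand {p c t β : ℝ} (ht : 0 < t) (hβ : t ^ β ≠ 1) :
    HasDerivAt
      (fun b : ℝ => |1 - t ^ b| ^ (p - 2) * (1 - t ^ b) * (1 - t ^ (c - b * (p - 1))))
      ((p - 1) * log t * |1 - t ^ β| ^ (p - 2) * (t ^ (c - β * (p - 1)) - t ^ β)) β := by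
  have hpow (x : ℝ) : HasDerivAt (fun b : ℝ => t ^ b) (t ^ x * log t) x :=
    (hasStrictDerivAt_const_rpow ht x).hasDerivAt
  have hJ := (hasDerivAt_abs_rpow_mul_self (q := p - 2) (sub_ne_zero.2 hβ.symm)).comp β
    ((hpow β).const_sub 1)
  have hE := ((hpow _).comp β (((hasDerivAt_id β).mul_const (p - 1)).const_sub c)).const_sub 1
  refine (hJ.mul hE).congr_deriv ?_
  simp only [Function.comp_apply, id]
  ring

lemma hardyIntegrand_deriv_nonneg_iff {p c t β : ℝ} (hp : 1 < p) (ht0 : 0 < t) (ht1 : t < 1)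
    (hβ : t ^ β ≠ 1) :
    0 ≤ (p - 1) * log t * |1 - t ^ β| ^ (p - 2) * (t ^ (c - β * (p - 1)) - t ^ β) ↔
      β ≤ c / p := by
  have hneg : (p - 1) * log t * |1 - t ^ β| ^ (p - 2) < 0 :=
    mul_neg_of_neg_of_pos (mul_neg_of_pos_of_neg (sub_pos.2 hp) (log_neg ht0 ht1))
      (rpow_pos_of_pos (abs_pos.2 (sub_ne_zero.2 hβ.symm)) _)
  rw [← mul_zero ((p - 1) * log t * |1 - t ^ β| ^ (p - 2)), mul_le_mul_left_of_neg hneg,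
    sub_nonpos, rpow_le_rpow_left_iff_of_base_lt_one ht0 ht1, le_div_iff₀ (by linarith)]
  constructor <;> intro h <;> linarith

theorem stmt_8_general (p s t : ℝ) (hp : 1 < p)
    (ht : t ∈ Set.Ioo (0:ℝ) 1) :
    ∀ β ∈ Set.Ioo (-(1 / (p - 1))) (0:ℝ) ∪ Set.Ioo (0:ℝ) (s * p / (p - 1)),
      DifferentiableAt ℝ
        (fun b : ℝ => |1 - t ^ b| ^ (p - 2) * (1 - t ^ b)
          * (1 - t ^ (s * p - 1 - b * (p - 1)))) β ∧
      (0 ≤ deriv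
        (fun b : ℝ => |1 - t ^ b| ^ (p - 2) * (1 - t ^ b)
          * (1 - t ^ (s * p - 1 - b * (p - 1)))) β ↔ β ≤ (s * p - 1) / p) := by
  intro β hβ
  obtain ⟨ht0, ht1⟩ := ht
  have hβ0 : β ≠ 0 := by rcases hβ with h | h <;> [exact h.2.ne; exact h.1.ne']
  have hβ1 : t ^ β ≠ 1 := rpow_ne_one_of_ne_zero ht0 ht1.ne hβ0
  have hd := hasDerivAt_hardyIntegrand (p := p) (c := s * p - 1) ht0 hβ1
  exact ⟨hd.differentiableAt, hd.deriv ▸ hardyIntegrand_deriv_nonneg_iff hp ht0 ht1 hβ1⟩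

theorem stmt_8 (p s t : ℝ) (hp : 1 < p) (hs : s ∈ Set.Ioo (0:ℝ) 1)
    (ht : t ∈ Set.Ioo (0:ℝ) 1) :
    ∀ β ∈ Set.Ioo (-(1 / (p - 1))) (0:ℝ) ∪ Set.Ioo (0:ℝ) (s * p / (p - 1)),
      DifferentiableAt ℝ
        (fun b : ℝ => |1 - t ^ b| ^ (p - 2) * (1 - t ^ b)
          * (1 - t ^ (s * p - 1 - b * (p - 1)))) β ∧
      (0 ≤ deriv
        (fun b : ℝ => |1 - t ^ b| ^ (p - 2) * (1 - t ^ b)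
          * (1 - t ^ (s * p - 1 - b * (p - 1)))) β ↔ β ≤ (s * p - 1) / p) :=
  stmt_8_general p s t hp ht
end

section
/- Let 1 < p < ∞ and 0 < s < 1. For every β with -1/(p-1) < β < sp/(p-1) and every t ∈ (0,1), one has J_p(1-t^β)(1 - t^{sp-1-β(p-1)}) ≤ |1 - t^{(sp-1)/p}|^p, where J_p(τ) = |τ|^{p-2}τ. Consequently λ(β) ≤ λ((sp-1)/p) = 2∫_0^1 |1 - t^{(sp-1)/p}|^p/(1-t)^{1+sp} dt + 2/(sp), where λ(β) = 2∫_0^1 J_p(1-t^β)(1 - t^{sp-1-β(p-1)})/(1-t)^{1+sp} dt + 2/(sp). -/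
/-!
Put `u = t ^ β` and `v = t ^ (s p - 1 - β (p - 1))`, so that
`u ^ (1 - 1/p) v ^ (1/p) = t ^ ((s p - 1)/p)`. If `1 - u` and `1 - v` have opposite signs, then
`J_p(1 - u)(1 - v) ≤ 0`. Otherwise its `p`-th root is `|1 - u| ^ (1 - 1/p) |1 - v| ^ (1/p)`, and the
two-term Hölder inequality `a^θ b^(1-θ) + c^θ d^(1-θ) ≤ (a + c)^θ (b + d)^(1-θ)`, applied to
`(1 - u, 1 - v), (u, v)` or to `(u - 1, v - 1), (1, 1)`, bounds it by `|1 - u ^ (1 - 1/p) v ^ (1/p)|`.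

Dividing by `(1 - t) ^ (1 + s p)` and integrating compares `λ(β)` with `λ((s p - 1)/p)`. For `β` in
the stated range both integrands are integrable: near `0` they are `O(t ^ a)` for some `a > -1`, and
near `1` they are `O((1 - t) ^ (p - 1 - s p))`, where `p - 1 - s p > -1`.
-/

open Real MeasureTheory Set

lemma rpow_mul_rpow_add_rpow_mul_rpow_le {θ a b c d : ℝ} (hθ₀ : 0 < θ) (hθ₁ : θ < 1)
    (ha : 0 ≤ a) (hb : 0 ≤ b) (hc : 0 ≤ c) (hd : 0 ≤ d) :
    a ^ θ * b ^ (1 - θ) + c ^ θ * d ^ (1 - θ) ≤ (a + c) ^ θ * (b + d) ^ (1 - θ) := by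
  have hθ' : 1 - θ ≠ 0 := by linarith
  have := inner_le_Lp_mul_Lq_of_nonneg Finset.univ (f := ![a ^ θ, c ^ θ])
    (g := ![b ^ (1 - θ), d ^ (1 - θ)]) (.inv_one_sub_inv hθ₀ hθ₁)
    (by simp [Fin.forall_fin_two, rpow_nonneg ha, rpow_nonneg hc])
    (by simp [Fin.forall_fin_two, rpow_nonneg hb, rpow_nonneg hd])
  simpa [Fin.sum_univ_two, ha, hb, hc, hd, hθ₀.ne', hθ'] using this

lemma abs_one_sub_rpow_mul_rpow_le {θ u v : ℝ} (hθ₀ : 0 < θ) (hθ₁ : θ < 1) (hu : 0 ≤ u)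
    (hv : 0 ≤ v) (huv : 0 ≤ (1 - u) * (1 - v)) :
    |1 - u| ^ θ * |1 - v| ^ (1 - θ) ≤ |1 - u ^ θ * v ^ (1 - θ)| := by
  rcases huv.eq_or_lt with h | h
  · rcases mul_eq_zero.1 h.symm with h | h
    · simp [h, zero_rpow hθ₀.ne']
    · simp [h, zero_rpow (sub_ne_zero.2 hθ₁.ne')]
  rcases mul_pos_iff.1 h with ⟨hu₁, hv₁⟩ | ⟨hu₁, hv₁⟩
  · have := rpow_mul_rpow_add_rpow_mul_rpow_le hθ₀ hθ₁ hu₁.le hv₁.le hu hv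
    simp only [sub_add_cancel, one_rpow, mul_one] at this
    rw [abs_of_pos hu₁, abs_of_pos hv₁]
    exact le_trans (by linarith) (le_abs_self _)
  · have := rpow_mul_rpow_add_rpow_mul_rpow_le hθ₀ hθ₁ (sub_nonneg.2 (sub_neg.1 hu₁).le)
      (sub_nonneg.2 (sub_neg.1 hv₁).le) zero_le_one zero_le_one
    simp only [sub_add_cancel, one_rpow, mul_one] at this
    rw [abs_of_neg hu₁, abs_of_neg hv₁, abs_sub_comm]
    simp only [neg_sub]
    exact le_trans (by linarith) (le_abs_self _)

lemma abs_rpow_sub_two_mul_mul_le {p u v : ℝ} (hp : 1 < p) (hu : 0 ≤ u) (hv : 0 ≤ v) :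
    |1 - u| ^ (p - 2) * (1 - u) * (1 - v) ≤ |1 - u ^ (1 - p⁻¹) * v ^ p⁻¹| ^ p := by
  rcases lt_or_ge ((1 - u) * (1 - v)) 0 with huv | huv
  · have : |1 - u| ^ (p - 2) * (1 - u) * (1 - v) ≤ 0 := by
      rw [mul_assoc]
      exact mul_nonpos_of_nonneg_of_nonpos (by positivity) huv.le
    exact this.trans (by positivity)
  have hθ₀ : 0 < 1 - p⁻¹ := sub_pos.2 (inv_lt_one_of_one_lt₀ hp)
  have hθ₁ : 1 - p⁻¹ < 1 := sub_lt_self 1 (inv_pos.2 (by linarith))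
  have holder := abs_one_sub_rpow_mul_rpow_le hθ₀ hθ₁ hu hv huv
  rw [sub_sub_cancel] at holder
  calc |1 - u| ^ (p - 2) * (1 - u) * (1 - v)
      = (|1 - u| ^ (1 - p⁻¹) * |1 - v| ^ p⁻¹) ^ p := by
        rw [mul_assoc, ← abs_of_nonneg huv, abs_mul, ← mul_assoc,
          ← rpow_add_one' (abs_nonneg _) (by linarith), mul_rpow (by positivity) (by positivity),
          ← rpow_mul (abs_nonneg _), ← rpow_mul (abs_nonneg _),
          inv_mul_cancel₀ (by linarith), rpow_one, sub_mul, inv_mul_cancel₀ (by linarith)]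
        ring_nf
    _ ≤ |1 - u ^ (1 - p⁻¹) * v ^ p⁻¹| ^ p := by gcongr

lemma abs_rpow_sub_two_mul_mul_le_rpow_div {p σ β t : ℝ} (hp : 1 < p) (ht : 0 < t) :
    |1 - t ^ β| ^ (p - 2) * (1 - t ^ β) * (1 - t ^ (σ - β * (p - 1))) ≤
      |1 - t ^ (σ / p)| ^ p := by
  convert abs_rpow_sub_two_mul_mul_le hp (rpow_nonneg ht.le β)
    (rpow_nonneg ht.le (σ - β * (p - 1))) using 4
  rw [← rpow_mul ht.le, ← rpow_mul ht.le, ← rpow_add ht]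
  congr 1
  field_simp
  ring

lemma abs_rpow_sub_two_mul_self_mul_self {p : ℝ} (hp : 1 < p) (x : ℝ) :
    |x| ^ (p - 2) * x * x = |x| ^ p := by
  rw [mul_assoc, ← abs_mul_abs_self, ← mul_assoc, ← rpow_add_one' (abs_nonneg x) (by linarith),
    ← rpow_add_one' (abs_nonneg x) (by linarith)]
  ring_nf

lemma abs_abs_rpow_sub_two_mul {p : ℝ} (hp : p ≠ 1) (x : ℝ) :
    |(|x| ^ (p - 2) * x)| = |x| ^ (p - 1) := by
  rw [abs_mul, abs_of_nonneg (by positivity),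
    ← rpow_add_one' (abs_nonneg x) (by contrapose! hp; linarith)]
  ring_nf

lemma abs_one_sub_rpow_le_two_mul_rpow_min {t : ℝ} (ht₀ : 0 < t) (ht₁ : t ≤ 1) (α : ℝ) :
    |1 - t ^ α| ≤ 2 * t ^ min α 0 := by
  have h₁ : 1 ≤ t ^ min α 0 := one_le_rpow_of_pos_of_le_one_of_nonpos ht₀ ht₁ (min_le_right _ _)
  have h₂ : t ^ α ≤ t ^ min α 0 := rpow_le_rpow_of_exponent_ge ht₀ ht₁ (min_le_left _ _)
  rw [abs_le]
  constructor <;> linarith [rpow_pos_of_pos ht₀ α]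

lemma one_sub_rpow_le {t α : ℝ} (ht₀ : 0 < t) (ht₁ : t < 1) (hα : 0 ≤ α) :
    1 - t ^ α ≤ (1 + α) * (1 - t) := by
  rcases le_total α 1 with h | h
  · have : t ≤ t ^ α := by
      simpa using rpow_le_rpow_of_exponent_ge ht₀ ht₁.le h
    nlinarith
  · have := one_add_mul_self_le_rpow_one_add (s := t - 1) (by linarith) h
    rw [add_sub_cancel] at this
    nlinarith

lemma abs_one_sub_rpow_le_mul_one_sub {t : ℝ} (ht₀ : 1 / 2 ≤ t) (ht₁ : t < 1) (α : ℝ) :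
    |1 - t ^ α| ≤ (1 + |α|) * 2 ^ |α| * (1 - t) := by
  have ht : 0 < t := by linarith
  rcases le_total 0 α with hα | hα
  · rw [abs_of_nonneg hα, abs_of_nonneg (by linarith [rpow_le_one ht.le ht₁.le hα])]
    calc 1 - t ^ α ≤ (1 + α) * (1 - t) := one_sub_rpow_le ht ht₁ hα
      _ ≤ (1 + α) * 2 ^ α * (1 - t) := by
        rw [mul_right_comm]
        exact le_mul_of_one_le_right (by nlinarith) (one_le_rpow (by norm_num) hα)
  · have hα' : 0 ≤ -α := by linarith
    have hsplit : t ^ α - 1 = t ^ α * (1 - t ^ (-α)) := by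
      rw [mul_sub, ← rpow_add ht]; simp
    have hpow : t ^ α ≤ 2 ^ (-α) := by
      calc t ^ α ≤ (1 / 2) ^ α := rpow_le_rpow_of_nonpos (by norm_num) ht₀ hα
        _ = 2 ^ (-α) := by rw [one_div, inv_rpow zero_le_two, rpow_neg zero_le_two]
    rw [abs_of_nonpos hα, abs_sub_comm,
      abs_of_nonneg (by linarith [one_le_rpow_of_pos_of_le_one_of_nonpos ht ht₁.le hα]), hsplit]
    calc t ^ α * (1 - t ^ (-α)) ≤ 2 ^ (-α) * ((1 + -α) * (1 - t)) :=
          mul_le_mul hpow (one_sub_rpow_le ht ht₁ hα')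
            (by linarith [rpow_le_one ht.le ht₁.le hα']) (by positivity)
      _ = (1 + -α) * 2 ^ (-α) * (1 - t) := by ring

lemma integrableOn_Ioo_zero_one_of_abs_le {f : ℝ → ℝ} (hf : Measurable f) {a b C₀ C₁ : ℝ}
    (ha : -1 < a) (hb : -1 < b) (h₀ : ∀ t ∈ Ioc (0 : ℝ) (1 / 2), |f t| ≤ C₀ * t ^ a)
    (h₁ : ∀ t ∈ Ioo (1 / 2 : ℝ) 1, |f t| ≤ C₁ * (1 - t) ^ b) :
    IntegrableOn f (Ioo 0 1) := by
  have hg₀ : IntegrableOn (fun t => C₀ * t ^ a) (Ioc 0 (1 / 2)) :=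
    ((intervalIntegrable_iff_integrableOn_Ioc_of_le (by norm_num)).1
      (intervalIntegral.intervalIntegrable_rpow' ha)).const_mul C₀
  have hg₁ : IntegrableOn (fun t => C₁ * (1 - t) ^ b) (Ioo (1 / 2) 1) := by
    have := (intervalIntegral.intervalIntegrable_rpow' hb (a := 0) (b := 1 / 2)).comp_sub_left 1
    rw [sub_zero, show (1 : ℝ) - 1 / 2 = 1 / 2 by norm_num] at this
    exact ((intervalIntegrable_iff_integrableOn_Ioo_of_le (by norm_num)).1 this.symm).const_mul C₁
  rw [← Ioc_union_Ioo_eq_Ioo (by norm_num : (0 : ℝ) ≤ 1 / 2) (by norm_num)]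
  exact IntegrableOn.union
    (hg₀.mono' hf.aestronglyMeasurable.restrict ((ae_restrict_mem measurableSet_Ioc).mono h₀))
    (hg₁.mono' hf.aestronglyMeasurable.restrict ((ae_restrict_mem measurableSet_Ioo).mono h₁))

lemma integrableOn_abs_rpow_sub_two_mul_mul_div {p s β : ℝ} (hp : 1 < p) (hs₀ : 0 < s)
    (hs₁ : s < 1) (hβ₁ : -1 < β * (p - 1)) (hβ₂ : -1 < s * p - 1 - β * (p - 1)) :
    IntegrableOn (fun t : ℝ => |1 - t ^ β| ^ (p - 2) * (1 - t ^ β) *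
      (1 - t ^ (s * p - 1 - β * (p - 1))) / (1 - t) ^ (1 + s * p)) (Ioo 0 1) := by
  set γ := s * p - 1 - β * (p - 1) with hγ
  have habs : ∀ t : ℝ, t < 1 →
      |(|1 - t ^ β| ^ (p - 2) * (1 - t ^ β) * (1 - t ^ γ) / (1 - t) ^ (1 + s * p))| =
        |1 - t ^ β| ^ (p - 1) * |1 - t ^ γ| / (1 - t) ^ (1 + s * p) := fun t ht => by
    rw [abs_div, abs_mul, abs_abs_rpow_sub_two_mul hp.ne',
      abs_of_pos (rpow_pos_of_pos (by linarith) _)]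
  refine integrableOn_Ioo_zero_one_of_abs_le (by fun_prop) (a := min β 0 * (p - 1) + min γ 0)
    (b := p - 1 - s * p) (C₀ := 2 ^ (p - 1) * 2 / (1 / 2) ^ (1 + s * p))
    (C₁ := ((1 + |β|) * 2 ^ |β|) ^ (p - 1) * ((1 + |γ|) * 2 ^ |γ|)) ?_ (by nlinarith) ?_ ?_
  · -- the exponent is one of `0`, `β (p - 1)`, `γ`, `β (p - 1) + γ = s p - 1`
    rcases le_total β 0 with h | h <;> rcases le_total γ 0 with h' | h' <;>
      simp only [min_eq_left, min_eq_right, h, h'] <;> nlinarith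
  · rintro t ⟨ht₀, ht₁⟩
    rw [habs t (by linarith)]
    calc |1 - t ^ β| ^ (p - 1) * |1 - t ^ γ| / (1 - t) ^ (1 + s * p)
        ≤ (2 * t ^ min β 0) ^ (p - 1) * (2 * t ^ min γ 0) / (1 / 2) ^ (1 + s * p) := by
          gcongr
          · exact abs_one_sub_rpow_le_two_mul_rpow_min ht₀ (by linarith) β
          · exact abs_one_sub_rpow_le_two_mul_rpow_min ht₀ (by linarith) γ
          · linarith
      _ = 2 ^ (p - 1) * 2 / (1 / 2) ^ (1 + s * p) * t ^ (min β 0 * (p - 1) + min γ 0) := by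
          rw [mul_rpow zero_le_two (by positivity), ← rpow_mul ht₀.le, rpow_add ht₀]
          ring
  · rintro t ⟨ht₀, ht₁⟩
    have h₁ : 0 < 1 - t := by linarith
    rw [habs t ht₁]
    calc |1 - t ^ β| ^ (p - 1) * |1 - t ^ γ| / (1 - t) ^ (1 + s * p)
        ≤ ((1 + |β|) * 2 ^ |β| * (1 - t)) ^ (p - 1) * ((1 + |γ|) * 2 ^ |γ| * (1 - t))
            / (1 - t) ^ (1 + s * p) := by
          gcongr
          · exact abs_one_sub_rpow_le_mul_one_sub ht₀.le ht₁ β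
          · exact abs_one_sub_rpow_le_mul_one_sub ht₀.le ht₁ γ
      _ = ((1 + |β|) * 2 ^ |β|) ^ (p - 1) * ((1 + |γ|) * 2 ^ |γ|)
            * ((1 - t) ^ (p - 1 + 1) / (1 - t) ^ (1 + s * p)) := by
          rw [mul_rpow (by positivity) h₁.le, rpow_add_one' h₁.le (by linarith)]
          ring
      _ = ((1 + |β|) * 2 ^ |β|) ^ (p - 1) * ((1 + |γ|) * 2 ^ |γ|) * (1 - t) ^ (p - 1 - s * p) := by
          rw [← rpow_sub h₁]
          ring_nf

theorem stmt_9 (p s : ℝ) (hp : 1 < p) (hs : s ∈ Set.Ioo (0:ℝ) 1) :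
    (∀ β ∈ Set.Ioo (-(1 / (p - 1))) (s * p / (p - 1)), ∀ t ∈ Set.Ioo (0:ℝ) 1,
      |1 - t ^ β| ^ (p - 2) * (1 - t ^ β) * (1 - t ^ (s * p - 1 - β * (p - 1)))
        ≤ |1 - t ^ ((s * p - 1) / p)| ^ p) ∧
    (∀ β ∈ Set.Ioo (-(1 / (p - 1))) (s * p / (p - 1)),
      2 * (∫ t in Set.Ioo (0:ℝ) 1,
          |1 - t ^ β| ^ (p - 2) * (1 - t ^ β) * (1 - t ^ (s * p - 1 - β * (p - 1)))
            / (1 - t) ^ (1 + s * p)) + 2 / (s * p) ≤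
        2 * (∫ t in Set.Ioo (0:ℝ) 1,
          |1 - t ^ ((s * p - 1) / p)| ^ p / (1 - t) ^ (1 + s * p)) + 2 / (s * p)) := by
  obtain ⟨hs₀, hs₁⟩ := hs
  refine ⟨fun β _ t ht => abs_rpow_sub_two_mul_mul_le_rpow_div hp ht.1,
    fun β ⟨hβ₁, hβ₂⟩ => ?_⟩
  have hp₀ : 0 < p := by linarith
  have hp₁ : 0 < p - 1 := by linarith
  have hsp : 0 < s * p := by positivity
  rw [neg_div', div_lt_iff₀ hp₁] at hβ₁
  rw [lt_div_iff₀ hp₁] at hβ₂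
  have hF := integrableOn_abs_rpow_sub_two_mul_mul_div hp hs₀ hs₁ (by linarith) (by linarith)
  have hγ : s * p - 1 - (s * p - 1) / p * (p - 1) = (s * p - 1) / p := by field_simp; ring
  have hG := integrableOn_abs_rpow_sub_two_mul_mul_div (β := (s * p - 1) / p) hp hs₀ hs₁
    (by rw [div_mul_eq_mul_div, lt_div_iff₀ hp₀]; nlinarith)
    (by rw [hγ, lt_div_iff₀ hp₀]; nlinarith)
  simp only [hγ, abs_rpow_sub_two_mul_self_mul_self hp] at hG
  have := setIntegral_mono_on hF hG measurableSet_Ioo fun t ht =>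
    div_le_div_of_nonneg_right (abs_rpow_sub_two_mul_mul_le_rpow_div hp ht.1)
      (rpow_nonneg (sub_nonneg.2 ht.2.le) _)
  linarith
end

section
/- Let 1 < p < ∞ and s = 1/p (so that sp = 1). Define λ(β) = 2∫_0^1 J_p(1-t^β)(1 - t^{-β(p-1)})/(1-t)^2 dt + 2, where J_p(τ) = |τ|^{p-2}τ, for -1/(p-1) < β < 1/(p-1). Then λ is an even function: λ(-β) = λ(β) for all β ∈ (-1/(p-1), 1/(p-1)). -/
/-! The integrand of `λ(-β)` coincides pointwise with that of `λ(β)`: substituting `a = t ^ β`,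
the identity `J_p(1 - a⁻¹) (1 - a ^ (p - 1)) = J_p(1 - a) (1 - a ^ (-(p - 1)))` follows from
`1 - a⁻¹ = -a⁻¹ (1 - a)`, the oddness of `J_p` and its `(p - 1)`-homogeneity. -/

/-- The paper's `J_p`. -/
noncomputable def signedRpow (p τ : ℝ) : ℝ := |τ| ^ (p - 2) * τ

lemma signedRpow_neg (p τ : ℝ) : signedRpow p (-τ) = -signedRpow p τ := by
  simp only [signedRpow, abs_neg]; ring

lemma signedRpow_mul_of_pos (p : ℝ) {c : ℝ} (hc : 0 < c) (τ : ℝ) :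
    signedRpow p (c * τ) = c ^ (p - 1) * signedRpow p τ := by
  have hpow : c ^ (p - 2) * c = c ^ (p - 1) := by
    rw [← Real.rpow_add_one hc.ne']; ring_nf
  rw [signedRpow, signedRpow, abs_mul, abs_of_pos hc, Real.mul_rpow hc.le (abs_nonneg τ), ← hpow]
  ring

lemma signedRpow_one_sub_inv_mul (p : ℝ) {a : ℝ} (ha : 0 < a) :
    signedRpow p (1 - a⁻¹) * (1 - a ^ (p - 1))
      = signedRpow p (1 - a) * (1 - (a ^ (p - 1))⁻¹) := by
  have hsub : 1 - a⁻¹ = -(a⁻¹ * (1 - a)) := by field_simp; ring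
  have hb : 0 < a ^ (p - 1) := Real.rpow_pos_of_pos ha _
  rw [hsub, signedRpow_neg, signedRpow_mul_of_pos p (inv_pos.mpr ha), Real.inv_rpow ha.le]
  field_simp
  ring

lemma signedRpow_one_sub_rpow_neg_mul (p β : ℝ) {t : ℝ} (ht : 0 < t) :
    signedRpow p (1 - t ^ (-β)) * (1 - t ^ (-(-β * (p - 1))))
      = signedRpow p (1 - t ^ β) * (1 - t ^ (-(β * (p - 1)))) := by
  rw [neg_mul, neg_neg, Real.rpow_neg ht.le, Real.rpow_neg ht.le, Real.rpow_mul ht.le]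
  exact signedRpow_one_sub_inv_mul p (Real.rpow_pos_of_pos ht β)

theorem stmt_11_general (p s : ℝ) (β : ℝ) :
    (fun b : ℝ => 2 * (∫ t in Set.Ioo (0:ℝ) 1,
        (|1 - t ^ b| ^ (p - 2) * (1 - t ^ b)) * (1 - t ^ (-(b * (p - 1))))
          / (1 - t) ^ (1 + s * p)) + 2 / (s * p)) (-β)
    = (fun b : ℝ => 2 * (∫ t in Set.Ioo (0:ℝ) 1,
        (|1 - t ^ b| ^ (p - 2) * (1 - t ^ b)) * (1 - t ^ (-(b * (p - 1))))
          / (1 - t) ^ (1 + s * p)) + 2 / (s * p)) β := by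
  refine congrArg (fun I => 2 * I + 2 / (s * p)) ?_
  refine MeasureTheory.setIntegral_congr_fun measurableSet_Ioo fun t ht => ?_
  exact congrArg (· / (1 - t) ^ (1 + s * p)) (signedRpow_one_sub_rpow_neg_mul p β ht.1)

theorem stmt_11 (p s : ℝ) (hp : 1 < p) (hsp : s = 1 / p) (β : ℝ)
    (hβ : β ∈ Set.Ioo (-(1 / (p - 1))) (1 / (p - 1))) :
    (fun b : ℝ => 2 * (∫ t in Set.Ioo (0:ℝ) 1,
        (|1 - t ^ b| ^ (p - 2) * (1 - t ^ b)) * (1 - t ^ (-(b * (p - 1))))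
          / (1 - t) ^ (1 + s * p)) + 2 / (s * p)) (-β)
    = (fun b : ℝ => 2 * (∫ t in Set.Ioo (0:ℝ) 1,
        (|1 - t ^ b| ^ (p - 2) * (1 - t ^ b)) * (1 - t ^ (-(b * (p - 1))))
          / (1 - t) ^ (1 + s * p)) + 2 / (s * p)) β :=
  stmt_11_general p s β
end

section
/- Let 1 < p < ∞, 0 < s < 1. For every pair of nonnegative functions u, v ∈ W^{s,p}(ℝ^N), setting σ = ((u^p + v^p)/2)^{1/p}, one has [σ]^p_{W^{s,p}(ℝ^N)} ≤ (1/2)[u]^p_{W^{s,p}(ℝ^N)} + (1/2)[v]^p_{W^{s,p}(ℝ^N)}. -/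
/-!
The power mean `(a, c) ↦ ((a ^ p + c ^ p) / 2) ^ (1 / p)` is a rescaled `ℓ^p` norm on `ℝ²`, so
the reverse triangle inequality (Minkowski) gives pointwise
`|σ x - σ y| ^ p ≤ |u x - u y| ^ p / 2 + |v x - v y| ^ p / 2`.
Dividing by `‖x - y‖ ^ (N + s p)` and integrating gives the claim.
-/

open Real MeasureTheory ENNReal Function

theorem Real.abs_Lp_sub_Lp_le {ι : Type*} (s : Finset ι) (f g : ι → ℝ) {p : ℝ} (hp : 1 ≤ p) :
    |(∑ i ∈ s, |f i| ^ p) ^ (1 / p) - (∑ i ∈ s, |g i| ^ p) ^ (1 / p)| ≤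
      (∑ i ∈ s, |f i - g i| ^ p) ^ (1 / p) := by
  have one_side : ∀ f g : ι → ℝ, (∑ i ∈ s, |f i| ^ p) ^ (1 / p) - (∑ i ∈ s, |g i| ^ p) ^ (1 / p) ≤
      (∑ i ∈ s, |f i - g i| ^ p) ^ (1 / p) := fun f g => by
    simpa using Real.Lp_add_le s (f - g) g hp
  rw [abs_sub_le_iff]
  exact ⟨one_side f g, by simpa only [abs_sub_comm] using one_side g f⟩

theorem abs_powerMean_sub_powerMean_le {p : ℝ} (hp : 1 ≤ p) {a b c d : ℝ} (ha : 0 ≤ a)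
    (hb : 0 ≤ b) (hc : 0 ≤ c) (hd : 0 ≤ d) :
    |((a ^ p + c ^ p) / 2) ^ (1 / p) - ((b ^ p + d ^ p) / 2) ^ (1 / p)| ≤
      ((|a - b| ^ p + |c - d| ^ p) / 2) ^ (1 / p) := by
  have hLp := Real.abs_Lp_sub_Lp_le Finset.univ ![a, c] ![b, d] hp
  simp only [Fin.sum_univ_two, Matrix.cons_val_zero, Matrix.cons_val_one, abs_of_nonneg ha,
    abs_of_nonneg hb, abs_of_nonneg hc, abs_of_nonneg hd] at hLp
  have h2 : (0 : ℝ) < 2 ^ (1 / p) := by positivity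
  rw [div_rpow (by positivity) zero_le_two, div_rpow (by positivity) zero_le_two,
    div_rpow (by positivity) zero_le_two, ← sub_div, abs_div, abs_of_pos h2]
  gcongr

theorem abs_powerMean_sub_powerMean_rpow_le {p : ℝ} (hp : 1 ≤ p) {a b c d : ℝ} (ha : 0 ≤ a)
    (hb : 0 ≤ b) (hc : 0 ≤ c) (hd : 0 ≤ d) :
    |((a ^ p + c ^ p) / 2) ^ (1 / p) - ((b ^ p + d ^ p) / 2) ^ (1 / p)| ^ p ≤
      |a - b| ^ p / 2 + |c - d| ^ p / 2 := by
  have hp0 : 0 < p := zero_lt_one.trans_le hp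
  calc _ ≤ (((|a - b| ^ p + |c - d| ^ p) / 2) ^ (1 / p)) ^ p := by
        gcongr; exact abs_powerMean_sub_powerMean_le hp ha hb hc hd
    _ = |a - b| ^ p / 2 + |c - d| ^ p / 2 := by
        rw [one_div, rpow_inv_rpow (by positivity) hp0.ne', add_div]

theorem ENNReal.ofReal_div_le_half_add_half {A B C D : ℝ} (h : A ≤ B / 2 + C / 2) (hD : 0 ≤ D) :
    ENNReal.ofReal (A / D) ≤ 1 / 2 * ENNReal.ofReal (B / D) + 1 / 2 * ENNReal.ofReal (C / D) := by
  calc ENNReal.ofReal (A / D) ≤ ENNReal.ofReal (B / D / 2 + C / D / 2) := by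
        gcongr
        calc A / D ≤ (B / 2 + C / 2) / D := by gcongr
          _ = B / D / 2 + C / D / 2 := by ring
    _ ≤ ENNReal.ofReal (B / D / 2) + ENNReal.ofReal (C / D / 2) := ENNReal.ofReal_add_le
    _ = _ := by
        rw [ENNReal.ofReal_div_of_pos two_pos, ENNReal.ofReal_div_of_pos two_pos]
        simp [ENNReal.div_eq_inv_mul]

theorem lintegral_lintegral_le_add_of_le {α β : Type*} [MeasurableSpace α] [MeasurableSpace β]
    {μ : Measure α} {ν : Measure β} [SFinite ν] {F G H : α → β → ℝ≥0∞} (a b : ℝ≥0∞)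
    (hF : Measurable (uncurry F)) (hG : Measurable (uncurry G))
    (h : ∀ x y, H x y ≤ a * F x y + b * G x y) :
    ∫⁻ x, ∫⁻ y, H x y ∂ν ∂μ ≤ a * ∫⁻ x, ∫⁻ y, F x y ∂ν ∂μ + b * ∫⁻ x, ∫⁻ y, G x y ∂ν ∂μ := by
  calc ∫⁻ x, ∫⁻ y, H x y ∂ν ∂μ ≤ ∫⁻ x, ∫⁻ y, a * F x y + b * G x y ∂ν ∂μ := by
        gcongr with x y; exact h x y
    _ = ∫⁻ x, a * ∫⁻ y, F x y ∂ν + b * ∫⁻ y, G x y ∂ν ∂μ := by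
        congr 1 with x
        rw [lintegral_add_left ((hF.of_uncurry_left).const_mul a),
          lintegral_const_mul a hF.of_uncurry_left, lintegral_const_mul b hG.of_uncurry_left]
    _ = _ := by
        rw [lintegral_add_left (hF.lintegral_prod_right.const_mul a),
          lintegral_const_mul a hF.lintegral_prod_right, lintegral_const_mul b hG.lintegral_prod_right]

theorem Measurable.gagliardo_integrand {E : Type*} [NormedAddCommGroup E] [MeasurableSpace E] [BorelSpace E]
    [SecondCountableTopology E] {w : E → ℝ} (hw : Measurable w) (p r : ℝ) :
    Measurable (uncurry fun x y => ENNReal.ofReal (|w x - w y| ^ p / ‖x - y‖ ^ r)) := by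
  fun_prop

theorem stmt_16_general (N : ℕ) (p s : ℝ) (hp : 1 < p)
    (u v : EuclideanSpace ℝ (Fin N) → ℝ) (hum : Measurable u) (hvm : Measurable v)
    (hu0 : ∀ x, 0 ≤ u x) (hv0 : ∀ x, 0 ≤ v x) :
    (∫⁻ x, ∫⁻ y, ENNReal.ofReal
        (|((u x ^ p + v x ^ p) / 2) ^ (1 / p) - ((u y ^ p + v y ^ p) / 2) ^ (1 / p)| ^ p
          / ‖x - y‖ ^ ((N : ℝ) + s * p))) ≤
      1 / 2 * (∫⁻ x, ∫⁻ y, ENNReal.ofReal (|u x - u y| ^ p / ‖x - y‖ ^ ((N : ℝ) + s * p))) +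
      1 / 2 * (∫⁻ x, ∫⁻ y, ENNReal.ofReal (|v x - v y| ^ p / ‖x - y‖ ^ ((N : ℝ) + s * p))) :=
  lintegral_lintegral_le_add_of_le _ _ (hum.gagliardo_integrand _ _) (hvm.gagliardo_integrand _ _)
    fun x y => ENNReal.ofReal_div_le_half_add_half
      (abs_powerMean_sub_powerMean_rpow_le hp.le (hu0 x) (hu0 y) (hv0 x) (hv0 y)) (by positivity)

theorem stmt_16 (N : ℕ) (p s : ℝ) (hp : 1 < p) (hs : s ∈ Set.Ioo (0:ℝ) 1)
    (u v : EuclideanSpace ℝ (Fin N) → ℝ) (hum : Measurable u) (hvm : Measurable v)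
    (hu0 : ∀ x, 0 ≤ u x) (hv0 : ∀ x, 0 ≤ v x)
    (hup : MemLp u (ENNReal.ofReal p)) (hvp : MemLp v (ENNReal.ofReal p))
    (huG : (∫⁻ x, ∫⁻ y, ENNReal.ofReal (|u x - u y| ^ p / ‖x - y‖ ^ ((N : ℝ) + s * p))) ≠ ⊤)
    (hvG : (∫⁻ x, ∫⁻ y, ENNReal.ofReal (|v x - v y| ^ p / ‖x - y‖ ^ ((N : ℝ) + s * p))) ≠ ⊤) :
    (∫⁻ x, ∫⁻ y, ENNReal.ofReal
        (|((u x ^ p + v x ^ p) / 2) ^ (1 / p) - ((u y ^ p + v y ^ p) / 2) ^ (1 / p)| ^ p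
          / ‖x - y‖ ^ ((N : ℝ) + s * p))) ≤
      1 / 2 * (∫⁻ x, ∫⁻ y, ENNReal.ofReal (|u x - u y| ^ p / ‖x - y‖ ^ ((N : ℝ) + s * p))) +
      1 / 2 * (∫⁻ x, ∫⁻ y, ENNReal.ofReal (|v x - v y| ^ p / ‖x - y‖ ^ ((N : ℝ) + s * p))) :=
  stmt_16_general N p s hp u v hum hvm hu0 hv0
end

section
/- Let 1 < p < ∞ and 0 < s < 1, and let U_0 be the characteristic function of (0,+∞) ⊂ ℝ. Then for every t > 0, 2∫_{-∞}^0 U_0(t)^{p-1} / (t-y)^{1+sp} dy = (2/(sp)) · t^{-sp}; in particular U_0 is a local weak solution of (-Δ_p)^s u = λ u^{p-1}/t^{sp} on (0,∞) with λ = 2/(sp). -/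
open MeasureTheory Set Real Filter

private lemma key_pre {r : ℝ} (hr : 0 < r) {c : ℝ} (hc : 0 < c) :
    IntegrableOn (fun y : ℝ => (c - y) ^ (-(1 + r))) (Iic 0) ∧
    ∫ y in Iic (0:ℝ), (c - y) ^ (-(1 + r)) = c ^ (-r) / r := by
  have hmp : MeasurePreserving (fun y : ℝ => c - y) volume volume :=
    Measure.measurePreserving_sub_left volume c
  have hemb : MeasurableEmbedding (fun y : ℝ => c - y) :=
    (Homeomorph.subLeft c).measurableEmbedding
  have hpre : (fun y : ℝ => c - y) ⁻¹' (Ici c) = Iic 0 := by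
    ext y
    simp only [mem_preimage, mem_Ici, mem_Iic]
    constructor <;> intro h <;> linarith
  have hIoi : IntegrableOn (fun t : ℝ => t ^ (-(1 + r))) (Ioi c) :=
    integrableOn_Ioi_rpow_of_lt (by linarith) hc
  have hIci : IntegrableOn (fun t : ℝ => t ^ (-(1 + r))) (Ici c) :=
    Iff.mpr integrableOn_Ici_iff_integrableOn_Ioi hIoi
  constructor
  · have h := (hmp.integrableOn_comp_preimage hemb
      (f := fun t : ℝ => t ^ (-(1 + r))) (s := Ici c)).mpr hIci
    rwa [hpre] at h
  · have h1 := hmp.setIntegral_preimage_emb hemb (fun t : ℝ => t ^ (-(1 + r))) (Ici c)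
    rw [hpre] at h1
    rw [show (fun y : ℝ => (c - y) ^ (-(1 + r))) =
      (fun y : ℝ => ((fun t : ℝ => t ^ (-(1 + r))) ((fun y : ℝ => c - y) y))) from rfl]
    rw [h1, integral_Ici_eq_integral_Ioi, integral_Ioi_rpow_of_lt (by linarith) hc,
      show -(1 + r) + 1 = -r by ring, neg_div_neg_eq]

private lemma key_intOn {r : ℝ} (hr : 0 < r) {c : ℝ} (hc : 0 < c) :
    IntegrableOn (fun y : ℝ => (c - y) ^ (-(1 + r))) (Iic 0) := (key_pre hr hc).1

private lemma key_eq {r : ℝ} (hr : 0 < r) {c : ℝ} (hc : 0 < c) :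
    ∫ y in Iic (0:ℝ), (c - y) ^ (-(1 + r)) = c ^ (-r) / r := (key_pre hr hc).2

private lemma int_aux {r : ℝ} (ψ : ℝ → ℝ) (hc : Continuous ψ) (hcs : HasCompactSupport ψ)
    (hsupp : tsupport ψ ⊆ Ioi 0) : Integrable (fun y : ℝ => ψ y * y ^ (-r)) := by
  have hcs' : HasCompactSupport (fun y : ℝ => ψ y * y ^ (-r)) :=
    hcs.mul_right
  have hcont : Continuous (fun y : ℝ => ψ y * y ^ (-r)) := by
    rw [continuous_iff_continuousAt]
    intro y
    by_cases hy : y ∈ tsupport ψ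
    · have hy0 : (0:ℝ) < y := hsupp hy
      exact hc.continuousAt.mul (Real.continuousAt_rpow_const y (-r) (Or.inl hy0.ne'))
    · have hev : (fun _ : ℝ => (0:ℝ)) =ᶠ[nhds y] fun z => ψ z * z ^ (-r) :=
        Filter.eventuallyEq_of_mem ((isClosed_tsupport ψ).isOpen_compl.mem_nhds hy)
          (fun z hz => by simp [image_eq_zero_of_notMem_tsupport hz])
      exact continuousAt_const.congr hev
  exact hcont.integrable_of_hasCompactSupport hcs'

theorem stmt_18 (p s : ℝ) (hp : 1 < p) (hs : s ∈ Set.Ioo (0:ℝ) 1) :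
    (∀ t : ℝ, 0 < t →
      2 * (∫ y in Set.Iio (0:ℝ),
          (if 0 < t then (1:ℝ) else 0) ^ (p - 1) / (t - y) ^ (1 + s * p))
        = 2 / (s * p) * t ^ (-(s * p))) ∧
    (∀ φ : ℝ → ℝ, ContDiff ℝ (⊤ : ℕ∞) φ → HasCompactSupport φ → tsupport φ ⊆ Set.Ioi 0 →
      (∫ x : ℝ, ∫ y : ℝ,
        (|(if 0 < x then (1:ℝ) else 0) - (if 0 < y then (1:ℝ) else 0)| ^ (p - 2) *
          ((if 0 < x then (1:ℝ) else 0) - (if 0 < y then (1:ℝ) else 0))) *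
          (φ x - φ y) / |x - y| ^ (1 + s * p))
        = 2 / (s * p) *
          ∫ x in Set.Ioi (0:ℝ),
            (if 0 < x then (1:ℝ) else 0) ^ (p - 1) * x ^ (-(s * p)) * φ x) := by
  have hr : 0 < s * p := mul_pos hs.1 (lt_trans one_pos hp)
  constructor
  · intro t ht
    have h1 : ∫ y in Iio (0:ℝ),
        (if 0 < t then (1:ℝ) else 0) ^ (p - 1) / (t - y) ^ (1 + s * p)
        = ∫ y in Iio (0:ℝ), (t - y) ^ (-(1 + s * p)) := by
      refine setIntegral_congr_fun measurableSet_Iio fun y hy => ?_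
      have hy0 : y < 0 := hy
      rw [if_pos ht, Real.one_rpow, Real.rpow_neg (by linarith : (0:ℝ) ≤ t - y), one_div]
    rw [h1, Measure.restrict_congr_set Iio_ae_eq_Iic, key_eq hr ht]
    ring
  · intro φ hφsm hφc hφs
    have hφcont : Continuous φ := hφsm.continuous
    have hφ0 : ∀ x : ℝ, ¬ 0 < x → φ x = 0 := fun x hx =>
      image_eq_zero_of_notMem_tsupport (fun hmem => hx (hφs hmem))
    -- inner integral for x > 0
    have hA : ∀ x : ℝ, 0 < x →
        (∫ y : ℝ,
          (|(if 0 < x then (1:ℝ) else 0) - (if 0 < y then (1:ℝ) else 0)| ^ (p - 2) *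
            ((if 0 < x then (1:ℝ) else 0) - (if 0 < y then (1:ℝ) else 0))) *
            (φ x - φ y) / |x - y| ^ (1 + s * p))
        = φ x * (x ^ (-(s * p)) / (s * p)) := by
      intro x hx
      have heq : (fun y : ℝ =>
          (|(if 0 < x then (1:ℝ) else 0) - (if 0 < y then (1:ℝ) else 0)| ^ (p - 2) *
            ((if 0 < x then (1:ℝ) else 0) - (if 0 < y then (1:ℝ) else 0))) *
            (φ x - φ y) / |x - y| ^ (1 + s * p))
          = (Iic (0:ℝ)).indicator (fun y => φ x * (x - y) ^ (-(1 + s * p))) := by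
        funext y
        by_cases hy : 0 < y
        · rw [indicator_of_notMem (fun h => hy.not_ge (mem_Iic.mp h)), if_pos hx, if_pos hy]
          simp
        · have hxy : (0:ℝ) < x - y := by have := not_lt.mp hy; linarith
          rw [indicator_of_mem (mem_Iic.mpr (not_lt.mp hy)), if_pos hx, if_neg hy,
            hφ0 y hy, sub_zero, sub_zero, abs_one, Real.one_rpow, one_mul, one_mul,
            abs_of_pos hxy, Real.rpow_neg hxy.le, div_eq_mul_inv]
      rw [heq, integral_indicator measurableSet_Iic, integral_const_mul, key_eq hr hx]
    -- inner integral for x ≤ 0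
    have hB : ∀ x : ℝ, ¬ 0 < x →
        (∫ y : ℝ,
          (|(if 0 < x then (1:ℝ) else 0) - (if 0 < y then (1:ℝ) else 0)| ^ (p - 2) *
            ((if 0 < x then (1:ℝ) else 0) - (if 0 < y then (1:ℝ) else 0))) *
            (φ x - φ y) / |x - y| ^ (1 + s * p))
        = ∫ y in Ioi (0:ℝ), φ y * (y - x) ^ (-(1 + s * p)) := by
      intro x hx
      have heq : (fun y : ℝ =>
          (|(if 0 < x then (1:ℝ) else 0) - (if 0 < y then (1:ℝ) else 0)| ^ (p - 2) *
            ((if 0 < x then (1:ℝ) else 0) - (if 0 < y then (1:ℝ) else 0))) *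
            (φ x - φ y) / |x - y| ^ (1 + s * p))
          = (Ioi (0:ℝ)).indicator (fun y => φ y * (y - x) ^ (-(1 + s * p))) := by
        funext y
        by_cases hy : 0 < y
        · have hxy : (0:ℝ) < y - x := by have := not_lt.mp hx; linarith
          rw [indicator_of_mem (mem_Ioi.mpr hy), if_neg hx, if_pos hy,
            hφ0 x hx, zero_sub, zero_sub, abs_neg, abs_one, Real.one_rpow, one_mul,
            show |x - y| = y - x from by rw [abs_sub_comm]; exact abs_of_pos hxy,
            Real.rpow_neg hxy.le]
          ring
        · rw [indicator_of_notMem (fun h => hy (mem_Ioi.mp h)), if_neg hx, if_neg hy]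
          simp
      rw [heq, integral_indicator measurableSet_Ioi]
    -- Fubini integrability
    have hmeas : AEStronglyMeasurable
        (Function.uncurry fun x y : ℝ => φ y * (y - x) ^ (-(1 + s * p)))
        ((volume.restrict (Iic (0:ℝ))).prod (volume.restrict (Ioi (0:ℝ)))) := by
      apply Measurable.aestronglyMeasurable
      have m1 : Measurable (fun q : ℝ × ℝ => (q.2 - q.1) ^ (-(1 + s * p))) := by
        measurability
      exact (hφcont.measurable.comp measurable_snd).mul m1
    have hFub : Integrable
        (Function.uncurry fun x y : ℝ => φ y * (y - x) ^ (-(1 + s * p)))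
        ((volume.restrict (Iic (0:ℝ))).prod (volume.restrict (Ioi (0:ℝ)))) := by
      rw [integrable_prod_iff' hmeas]
      constructor
      · filter_upwards [ae_restrict_mem measurableSet_Ioi] with y hy
        simp only [Function.uncurry_apply_pair]
        exact ((key_intOn hr hy).const_mul (φ y))
      · have habs_supp : tsupport (fun y : ℝ => |φ y|) ⊆ Ioi 0 := by
          refine subset_trans (closure_mono ?_) hφs
          intro y hy
          simp only [Function.mem_support] at hy ⊢
          intro h; exact hy (by rw [h, abs_zero])
        have hnice0 : Integrable (fun y : ℝ => |φ y| * y ^ (-(s * p))) :=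
          int_aux (fun y => |φ y|) hφcont.abs (hφc.comp_left (g := abs) abs_zero) habs_supp
        have hnice1 := hnice0.div_const (s * p)
        simp_rw [mul_div_assoc] at hnice1
        have hnice : Integrable (fun y : ℝ => |φ y| * (y ^ (-(s * p)) / (s * p)))
            (volume.restrict (Ioi (0:ℝ))) := hnice1.integrableOn
        simp only [Function.uncurry_apply_pair]
        refine hnice.congr ?_
        filter_upwards [ae_restrict_mem measurableSet_Ioi] with y hy
        have h1 : ∫ x, ‖φ y * (y - x) ^ (-(1 + s * p))‖ ∂(volume.restrict (Iic (0:ℝ)))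
            = ∫ x in Iic (0:ℝ), |φ y| * (y - x) ^ (-(1 + s * p)) := by
          refine integral_congr_ae ?_
          filter_upwards [ae_restrict_mem measurableSet_Iic] with x hx
          have hyx : (0:ℝ) < y - x := by
            have h₁ : x ≤ 0 := hx
            have h₂ : (0:ℝ) < y := hy
            linarith
          rw [Real.norm_eq_abs, abs_mul, abs_of_nonneg (Real.rpow_nonneg hyx.le _)]
        rw [h1, integral_const_mul, key_eq hr hy]
    -- rewrite the outer integrand
    have houter : (fun x : ℝ => ∫ y : ℝ,
        (|(if 0 < x then (1:ℝ) else 0) - (if 0 < y then (1:ℝ) else 0)| ^ (p - 2) *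
          ((if 0 < x then (1:ℝ) else 0) - (if 0 < y then (1:ℝ) else 0))) *
          (φ x - φ y) / |x - y| ^ (1 + s * p))
        = fun x : ℝ =>
          (Ioi (0:ℝ)).indicator (fun x => φ x * (x ^ (-(s * p)) / (s * p))) x
          + (Iic (0:ℝ)).indicator
              (fun x => ∫ y in Ioi (0:ℝ), φ y * (y - x) ^ (-(1 + s * p))) x := by
      funext x
      by_cases hx : 0 < x
      · rw [hA x hx, indicator_of_mem (mem_Ioi.mpr hx),
          indicator_of_notMem (fun h => hx.not_ge (mem_Iic.mp h)), add_zero]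
      · rw [hB x hx, indicator_of_notMem (fun h => hx (mem_Ioi.mp h)),
          indicator_of_mem (mem_Iic.mpr (not_lt.mp hx)), zero_add]
    have hi1 : Integrable
        ((Ioi (0:ℝ)).indicator (fun x => φ x * (x ^ (-(s * p)) / (s * p)))) := by
      refine IntegrableOn.integrable_indicator ?_ measurableSet_Ioi
      have h0 := (int_aux φ hφcont hφc hφs (r := s * p)).div_const (s * p)
      simp_rw [mul_div_assoc] at h0
      exact h0.integrableOn
    have hi2 : Integrable
        ((Iic (0:ℝ)).indicator
          (fun x => ∫ y in Ioi (0:ℝ), φ y * (y - x) ^ (-(1 + s * p)))) := by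
      refine IntegrableOn.integrable_indicator ?_ measurableSet_Iic
      have h2 := hFub.integral_prod_left
      simp only [Function.uncurry_apply_pair] at h2
      exact h2
    rw [houter, integral_add hi1 hi2, integral_indicator measurableSet_Ioi,
      integral_indicator measurableSet_Iic]
    have hswap : (∫ x in Iic (0:ℝ), ∫ y in Ioi (0:ℝ), φ y * (y - x) ^ (-(1 + s * p)))
        = ∫ y in Ioi (0:ℝ), φ y * (y ^ (-(s * p)) / (s * p)) := by
      have hsw := integral_integral_swap
        (f := fun x y : ℝ => φ y * (y - x) ^ (-(1 + s * p))) hFub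
      rw [hsw]
      refine setIntegral_congr_fun measurableSet_Ioi fun y hy => ?_
      rw [integral_const_mul, key_eq hr hy]
    have hfin : (∫ x in Ioi (0:ℝ), φ x * (x ^ (-(s * p)) / (s * p)))
        = (∫ x in Ioi (0:ℝ),
            (if 0 < x then (1:ℝ) else 0) ^ (p - 1) * x ^ (-(s * p)) * φ x) / (s * p) := by
      rw [← integral_div]
      refine setIntegral_congr_fun measurableSet_Ioi fun x hx => ?_
      rw [if_pos (mem_Ioi.mp hx), Real.one_rpow, one_mul]
      ring
    rw [hswap, hfin]
    ring
end
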